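/- arXiv:1411.3971 — 3 statements merged into one kernel-verified Lean document; each statement's English description precedes it below -/
import Mathlib

section
/- Let (Z_n)_{n≥0} be an increasing sequence of real-valued functions on [0,T] (for each ω) such that each Z_n is a supermartingale dominating a process U_n, where (U_n) increases pointwise to U and Z_n is the smallest supermartingale dominating U_n (in discrete time over a finite index set of times). Then Z = sup_n Z_n is the smallest supermartingale dominating U, provided Z is integrable at each time. -/
/-!
Backward induction on the number of remaining steps. The only analytic input is conditional
monotone convergence: if `f n ↑ g` then `μ[f n | m] ↑ μ[g | m]` a.e. The limit `L` of the
increasing sequence `μ[f n | m]` is at most `μ[g | m]`, and ordinary monotone convergence gives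
`∫ L = lim ∫ f n = ∫ g = ∫ μ[g | m]`, so the two agree a.e. Since `max` is continuous, the
recursion `Z_t = max U_t E[Z_{t+1} | ℱ_t]` then passes to the limit, and a monotone limit is
a supremum.
-/

open MeasureTheory Filter

/-- The discrete-time Snell envelope over `{0,…,T}`, defined by backward
recursion `Z_T = U_T`, `Z_t = max (U_t) (E[Z_{t+1} | ℱ_t])`, via an auxiliary
recursion on the number of remaining steps. -/
noncomputable def snellAux {Ω : Type*} {m0 : MeasurableSpace Ω} (μ : Measure Ω)
    (ℱ : MeasureTheory.Filtration ℕ m0) (U : ℕ → Ω → ℝ) (T : ℕ) : ℕ → Ω → ℝ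
  | 0 => U T
  | (k + 1) => fun ω =>
      max (U (T - (k + 1)) ω) ((μ[snellAux μ ℱ U T k | ℱ (T - (k + 1))]) ω)

noncomputable def snell {Ω : Type*} {m0 : MeasurableSpace Ω} (μ : Measure Ω)
    (ℱ : MeasureTheory.Filtration ℕ m0) (U : ℕ → Ω → ℝ) (T : ℕ) (t : ℕ) : Ω → ℝ :=
  snellAux μ ℱ U T (T - t)

open Topology

section MonotoneConvergence

variable {α : Type*} {m m0 : MeasurableSpace α} {μ : Measure α} {f : ℕ → α → ℝ} {g : α → ℝ}

lemma ae_tendsto_of_monotone_of_tendsto_integral (hf : ∀ n, Integrable (f n) μ)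
    (hg : Integrable g μ) (h_mono : ∀ᵐ x ∂μ, Monotone fun n ↦ f n x)
    (h_le : ∀ n, f n ≤ᵐ[μ] g)
    (h_int : Tendsto (fun n ↦ ∫ x, f n x ∂μ) atTop (𝓝 (∫ x, g x ∂μ))) :
    ∀ᵐ x ∂μ, Tendsto (fun n ↦ f n x) atTop (𝓝 (g x)) := by
  set L : α → ℝ := fun x ↦ ⨆ n, f n x
  have hfL : ∀ᵐ x ∂μ, Tendsto (fun n ↦ f n x) atTop (𝓝 (L x)) := by
    filter_upwards [h_mono, ae_all_iff.2 h_le] with x hx hxg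
    exact tendsto_atTop_ciSup hx ⟨g x, Set.forall_mem_range.2 hxg⟩
  have hLg : L ≤ᵐ[μ] g := by
    filter_upwards [ae_all_iff.2 h_le] with x hxg using ciSup_le hxg
  have hf0L : f 0 ≤ᵐ[μ] L := by
    filter_upwards [h_mono, hfL] with x hx hxL using hx.ge_of_tendsto hxL 0
  have hL : Integrable L μ :=
    integrable_of_le_of_le
      (aestronglyMeasurable_of_tendsto_ae atTop (fun n ↦ (hf n).aestronglyMeasurable) hfL)
      hf0L hLg (hf 0) hg
  have hLeq : L =ᵐ[μ] g := (integral_eq_iff_of_ae_le hL hg hLg).1 <|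
    tendsto_nhds_unique (integral_tendsto_of_tendsto_of_monotone hf hL h_mono hfL) h_int
  filter_upwards [hfL, hLeq] with x hx hxg
  rwa [← hxg]

theorem ae_tendsto_condExp_of_monotone (hf : ∀ n, Integrable (f n) μ) (hg : Integrable g μ)
    (h_mono : ∀ᵐ x ∂μ, Monotone fun n ↦ f n x)
    (h_tendsto : ∀ᵐ x ∂μ, Tendsto (fun n ↦ f n x) atTop (𝓝 (g x))) :
    ∀ᵐ x ∂μ, Tendsto (fun n ↦ (μ[f n | m]) x) atTop (𝓝 ((μ[g | m]) x)) := by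
  by_cases hm : m ≤ m0
  swap
  · simp only [condExp_of_not_le hm]
    exact ae_of_all _ fun _ ↦ tendsto_const_nhds
  by_cases hμm : SigmaFinite (μ.trim hm)
  swap
  · simp only [condExp_of_not_sigmaFinite hm hμm]
    exact ae_of_all _ fun _ ↦ tendsto_const_nhds
  have h_le : ∀ n, f n ≤ᵐ[μ] g := fun n ↦ by
    filter_upwards [h_mono, h_tendsto] with x hx hxg using hx.ge_of_tendsto hxg n
  have h_succ : ∀ n, μ[f n | m] ≤ᵐ[μ] μ[f (n + 1) | m] := fun n ↦
    condExp_mono (hf n) (hf (n + 1)) (h_mono.mono fun _ hx ↦ hx n.le_succ)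
  refine ae_tendsto_of_monotone_of_tendsto_integral (fun _ ↦ integrable_condExp)
    integrable_condExp ?_ (fun n ↦ condExp_mono (hf n) hg (h_le n)) ?_
  · filter_upwards [ae_all_iff.2 h_succ] with x hx using monotone_nat_of_le_succ hx
  · simp only [integral_condExp hm]
    exact integral_tendsto_of_tendsto_of_monotone hf hg h_mono h_tendsto

end MonotoneConvergence

section SnellEnvelope

variable {Ω : Type*} {m0 : MeasurableSpace Ω} {μ : Measure Ω} {ℱ : Filtration ℕ m0} {T : ℕ}

lemma integrable_snellAux {U : ℕ → Ω → ℝ} (hU : ∀ t, Integrable (U t) μ) :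
    ∀ k, Integrable (snellAux μ ℱ U T k) μ
  | 0 => hU T
  | _ + 1 => (hU _).sup integrable_condExp

lemma snellAux_mono {U V : ℕ → Ω → ℝ} (hU : ∀ t, Integrable (U t) μ)
    (hV : ∀ t, Integrable (V t) μ) (hUV : ∀ t, U t ≤ᵐ[μ] V t) :
    ∀ k, snellAux μ ℱ U T k ≤ᵐ[μ] snellAux μ ℱ V T k
  | 0 => hUV T
  | k + 1 => by
    filter_upwards [hUV (T - (k + 1)), condExp_mono (m := ℱ (T - (k + 1)))
      (integrable_snellAux hU k) (integrable_snellAux hV k) (snellAux_mono hU hV hUV k)]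
      with ω h₁ h₂ using max_le_max h₁ h₂

variable {U : ℕ → ℕ → Ω → ℝ} {Ulim : ℕ → Ω → ℝ}

lemma ae_monotone_snellAux (hint : ∀ n t, Integrable (U n t) μ)
    (hmono : ∀ t, ∀ᵐ ω ∂μ, Monotone fun n ↦ U n t ω) (k : ℕ) :
    ∀ᵐ ω ∂μ, Monotone fun n ↦ snellAux μ ℱ (U n) T k ω := by
  have h_succ : ∀ n, snellAux μ ℱ (U n) T k ≤ᵐ[μ] snellAux μ ℱ (U (n + 1)) T k := fun n ↦
    snellAux_mono (hint n) (hint (n + 1)) (fun t ↦ (hmono t).mono fun _ hω ↦ hω n.le_succ) k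
  filter_upwards [ae_all_iff.2 h_succ] with ω hω using monotone_nat_of_le_succ hω

lemma ae_tendsto_snellAux (hint : ∀ n t, Integrable (U n t) μ)
    (hintl : ∀ t, Integrable (Ulim t) μ) (hmono : ∀ t, ∀ᵐ ω ∂μ, Monotone fun n ↦ U n t ω)
    (hconv : ∀ t, ∀ᵐ ω ∂μ, Tendsto (fun n ↦ U n t ω) atTop (𝓝 (Ulim t ω))) :
    ∀ k, ∀ᵐ ω ∂μ, Tendsto (fun n ↦ snellAux μ ℱ (U n) T k ω) atTop
      (𝓝 (snellAux μ ℱ Ulim T k ω))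
  | 0 => hconv T
  | k + 1 => by
    filter_upwards [hconv (T - (k + 1)), ae_tendsto_condExp_of_monotone (m := ℱ (T - (k + 1)))
      (fun n ↦ integrable_snellAux (hint n) k) (integrable_snellAux hintl k)
      (ae_monotone_snellAux hint hmono k) (ae_tendsto_snellAux hint hintl hmono hconv k)]
      with ω h₁ h₂ using h₁.max h₂

end SnellEnvelope

theorem stmt7_general {Ω : Type*} {m0 : MeasurableSpace Ω} (μ : Measure Ω)
    (ℱ : MeasureTheory.Filtration ℕ m0) (T : ℕ)
    (U : ℕ → ℕ → Ω → ℝ) (Ulim : ℕ → Ω → ℝ)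
    (hint : ∀ n t, Integrable (U n t) μ) (hintl : ∀ t, Integrable (Ulim t) μ)
    (hmono : ∀ n t ω, U n t ω ≤ U (n + 1) t ω)
    (hconv : ∀ t ω, Tendsto (fun n => U n t ω) atTop (nhds (Ulim t ω))) :
    ∀ t, t ≤ T →
      (fun ω => ⨆ n, snell μ ℱ (U n) T t ω) =ᵐ[μ] snell μ ℱ Ulim T t := by
  intro t _
  have hmono' : ∀ t, ∀ᵐ ω ∂μ, Monotone fun n ↦ U n t ω := fun t ↦
    ae_of_all _ fun ω ↦ monotone_nat_of_le_succ fun n ↦ hmono n t ω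
  filter_upwards [ae_monotone_snellAux (ℱ := ℱ) (T := T) hint hmono' (T - t),
    ae_tendsto_snellAux hint hintl hmono' (fun t ↦ ae_of_all _ (hconv t)) (T - t)]
    with ω h_mono h_lim
  exact (isLUB_of_tendsto_atTop h_mono h_lim).ciSup_eq

/-- Monotone convergence of Snell envelopes: if `U n ↑ U` pointwise (adapted,
integrable processes over the finite horizon `{0,…,T}`) and the pointwise
supremum of the Snell envelopes of the `U n` is integrable at each time, then
`sup_n Z^{U_n}` coincides (a.e., at each time `t ≤ T`) with the Snell envelope
of `U`, i.e. with the smallest supermartingale dominating `U`. -/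
theorem stmt7 {Ω : Type*} {m0 : MeasurableSpace Ω} (μ : Measure Ω) [IsProbabilityMeasure μ]
    (ℱ : MeasureTheory.Filtration ℕ m0) (T : ℕ)
    (U : ℕ → ℕ → Ω → ℝ) (Ulim : ℕ → Ω → ℝ)
    (hadp : ∀ n, Adapted ℱ (U n)) (hadpl : Adapted ℱ Ulim)
    (hint : ∀ n t, Integrable (U n t) μ) (hintl : ∀ t, Integrable (Ulim t) μ)
    (hmono : ∀ n t ω, U n t ω ≤ U (n + 1) t ω)
    (hconv : ∀ t ω, Tendsto (fun n => U n t ω) atTop (nhds (Ulim t ω)))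
    (hZint : ∀ t, Integrable (fun ω => ⨆ n, snell μ ℱ (U n) T t ω) μ) :
    ∀ t, t ≤ T →
      (fun ω => ⨆ n, snell μ ℱ (U n) T t ω) =ᵐ[μ] snell μ ℱ Ulim T t :=
  stmt7_general μ ℱ T U Ulim hint hintl hmono hconv
end

section
/- Let U be an adapted integrable process in discrete time over {0,...,T}, Z its Snell envelope. Define the stopping time τ* = min{ t ≥ 0 : Z_t = U_t }. Then the stopped process (Z_{t ∧ τ*})_{0≤t≤T} is a martingale, and consequently Z_0 = E[U_{τ*}] = sup over all stopping times τ of E[U_τ]. -/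
/-!
Strictly before `τ*` the maximum in the recursion `Z_t = max (U_t) (E[Z_{t+1} | ℱ_t])` is
attained by the conditional expectation, so the increments `1_{t < τ*} (Z_{t+1} - Z_t)` of the
stopped envelope have zero conditional mean and `Z_{· ∧ τ*}` is a martingale. Hence
`E Z_0 = E Z_{T ∧ τ*} = E U_{τ*}`. For any stopping time `σ ≤ T`, `U ≤ Z` and optional stopping
for the supermartingale `Z` give `E U_σ ≤ E Z_σ ≤ E Z_0`.
-/

open MeasureTheory Filter

/-- The first time the Snell envelope meets the reward process (well defined
since `Z_T = U_T`). -/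
noncomputable def snellHit {Ω : Type*} {m0 : MeasurableSpace Ω} (μ : Measure Ω)
    (ℱ : MeasureTheory.Filtration ℕ m0) (U : ℕ → Ω → ℝ) (T : ℕ) (ω : Ω) : ℕ :=
  sInf {t | snell μ ℱ U T t ω = U t ω}

namespace MeasureTheory

variable {Ω : Type*} {m0 : MeasurableSpace Ω} {μ : Measure Ω} {ℱ : Filtration ℕ m0}

theorem stoppedProcess_natCast_eq {β : Type*} (u : ℕ → Ω → β) (τ : Ω → ℕ) :
    stoppedProcess u (fun ω => (τ ω : WithTop ℕ)) = fun i ω => u (min i (τ ω)) ω := by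
  ext i ω
  show u (min (WithTop.some i) (WithTop.some (τ ω))).untopA ω = _
  rw [← WithTop.coe_min]
  rfl

theorem stoppedProcess_add_one_sub {E : Type*} [AddGroup E] (u : ℕ → Ω → E)
    (τ : Ω → WithTop ℕ) (i : ℕ) :
    stoppedProcess u τ (i + 1) - stoppedProcess u τ i
      = {ω | (i : WithTop ℕ) < τ ω}.indicator (u (i + 1) - u i) := by
  ext ω
  by_cases h : (i : WithTop ℕ) < τ ω
  · -- the successor-order instances live on `ℕ∞`, which unfolds to `WithTop ℕ`
    have h' : ((i + 1 : ℕ) : WithTop ℕ) ≤ τ ω := Order.add_one_le_of_lt (α := ℕ∞) h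
    rw [Pi.sub_apply, stoppedProcess_eq_of_le (i := i + 1) h',
      stoppedProcess_eq_of_le (i := i) h.le]
    simp [h]
  · have h' : τ ω ≤ ((i + 1 : ℕ) : WithTop ℕ) := (not_lt.1 h).trans (by simp)
    rw [Pi.sub_apply, stoppedProcess_eq_of_ge (i := i + 1) h',
      stoppedProcess_eq_of_ge (i := i) (not_lt.1 h)]
    simp [h]

theorem martingale_stoppedProcess_of_condExp_eq {E : Type*} [NormedAddCommGroup E]
    [NormedSpace ℝ E] [CompleteSpace E] [IsFiniteMeasure μ] {f : ℕ → Ω → E}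
    {τ : Ω → WithTop ℕ} (hadp : StronglyAdapted ℱ f) (hint : ∀ i, Integrable (f i) μ)
    (hτ : IsStoppingTime ℱ τ)
    (hf : ∀ i : ℕ, ∀ᵐ ω ∂μ, (i : WithTop ℕ) < τ ω → (μ[f (i + 1) | ℱ i]) ω = f i ω) :
    Martingale (stoppedProcess f τ) ℱ μ := by
  refine martingale_of_condExp_sub_eq_zero_nat (hadp.stoppedProcess_of_discrete hτ)
    (integrable_stoppedProcess hτ hint) fun i => ?_
  have hs : MeasurableSet[ℱ i] {ω | (i : WithTop ℕ) < τ ω} := hτ.measurableSet_gt i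
  have hsub : μ[f (i + 1) - f i | ℱ i] =ᵐ[μ] μ[f (i + 1) | ℱ i] - f i := by
    filter_upwards [condExp_sub (m := ℱ i) (hint (i + 1)) (hint i)] with ω hω
    rw [hω, Pi.sub_apply, Pi.sub_apply,
      condExp_of_stronglyMeasurable (ℱ.le i) (hadp i) (hint i)]
  rw [stoppedProcess_add_one_sub]
  filter_upwards [condExp_indicator ((hint (i + 1)).sub (hint i)) hs, hsub, hf i]
    with ω hind hsub hfω
  rw [hind]
  by_cases h : (i : WithTop ℕ) < τ ω
  · simp [h, hsub, hfω h]
  · simp [h]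

theorem Supermartingale.integral_stoppedValue_le [SigmaFiniteFiltration μ ℱ]
    {f : ℕ → Ω → ℝ} (hf : Supermartingale f ℱ μ) {τ π : Ω → WithTop ℕ} (hτ : IsStoppingTime ℱ τ)
    (hπ : IsStoppingTime ℱ π) (hle : τ ≤ π) {N : ℕ} (hbdd : ∀ ω, π ω ≤ N) :
    ∫ ω, stoppedValue f π ω ∂μ ≤ ∫ ω, stoppedValue f τ ω ∂μ := by
  have hneg (σ : Ω → WithTop ℕ) : stoppedValue (-f) σ = fun ω => -stoppedValue f σ ω := rfl
  have := hf.neg.expected_stoppedValue_mono hτ hπ hle hbdd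
  rwa [hneg, hneg, integral_neg, integral_neg, neg_le_neg_iff] at this

end MeasureTheory

section Snell

variable {Ω : Type*} {m0 : MeasurableSpace Ω} {μ : Measure Ω} {ℱ : Filtration ℕ m0}
  {T : ℕ} {U : ℕ → Ω → ℝ}

theorem snell_of_le {t : ℕ} (h : T ≤ t) : snell μ ℱ U T t = U T := by
  rw [snell, Nat.sub_eq_zero_of_le h, snellAux]

theorem snell_eq_max {t : ℕ} (h : t < T) :
    snell μ ℱ U T t = fun ω => max (U t ω) ((μ[snell μ ℱ U T (t + 1) | ℱ t]) ω) := by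
  have hk : T - t = T - (t + 1) + 1 := by omega
  rw [snell, hk, snellAux, snell, ← hk, Nat.sub_sub_self h.le]

theorem integrable_snell (hint : ∀ t, Integrable (U t) μ) (t : ℕ) :
    Integrable (snell μ ℱ U T t) μ := by
  suffices ∀ k, Integrable (snellAux μ ℱ U T k) μ from this _
  intro k
  induction k with
  | zero => exact hint T
  | succ k _ => exact (hint _).sup integrable_condExp

theorem adapted_snell (hadp : Adapted ℱ U) : Adapted ℱ (snell μ ℱ U T) := by
  suffices ∀ k, Measurable[ℱ (T - k)] (snellAux μ ℱ U T k) from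
    fun t => (this (T - t)).mono (ℱ.mono (by omega)) le_rfl
  intro k
  induction k with
  | zero => exact hadp T
  | succ k _ => exact (hadp _).max stronglyMeasurable_condExp.measurable

theorem le_snell {t : ℕ} (h : t ≤ T) (ω : Ω) : U t ω ≤ snell μ ℱ U T t ω := by
  rcases h.lt_or_eq with h | rfl
  · rw [snell_eq_max h]
    exact le_max_left _ _
  · rw [snell_of_le le_rfl]

theorem supermartingale_snell [IsFiniteMeasure μ] (hadp : Adapted ℱ U)
    (hint : ∀ t, Integrable (U t) μ) : Supermartingale (snell μ ℱ U T) ℱ μ := by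
  refine supermartingale_nat (fun t => (adapted_snell hadp t).stronglyMeasurable)
    (integrable_snell hint) fun t => ?_
  rcases lt_or_ge t T with h | h
  · rw [snell_eq_max h]
    exact Eventually.of_forall fun ω => le_max_right _ _
  · have hUT : StronglyMeasurable[ℱ t] (U T) := ((hadp T).mono (ℱ.mono h) le_rfl).stronglyMeasurable
    rw [snell_of_le h, snell_of_le (h.trans t.le_succ),
      condExp_of_stronglyMeasurable (ℱ.le t) hUT (hint T)]

theorem snell_self (ω : Ω) : snell μ ℱ U T T ω = U T ω := by
  rw [snell_of_le le_rfl]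

theorem snellHit_le (ω : Ω) : snellHit μ ℱ U T ω ≤ T :=
  Nat.sInf_le (snell_self ω)

theorem snell_snellHit (ω : Ω) :
    snell μ ℱ U T (snellHit μ ℱ U T ω) ω = U (snellHit μ ℱ U T ω) ω :=
  Nat.sInf_mem (s := {t | snell μ ℱ U T t ω = U t ω}) ⟨T, snell_self ω⟩

theorem snellHit_eq_hittingAfter :
    (fun ω => (snellHit μ ℱ U T ω : WithTop ℕ))
      = hittingAfter (fun t => snell μ ℱ U T t - U t) {0} 0 := by
  ext ω
  have hT : ∃ t, snell μ ℱ U T t ω = U t ω := ⟨T, snell_self ω⟩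
  simp [hittingAfter, hT, snellHit, sub_eq_zero]

theorem isStoppingTime_snellHit (hadp : Adapted ℱ U) :
    IsStoppingTime ℱ (fun ω => (snellHit μ ℱ U T ω : WithTop ℕ)) := by
  rw [snellHit_eq_hittingAfter]
  exact ((adapted_snell hadp).sub hadp).isStoppingTime_hittingAfter (measurableSet_singleton 0)

theorem snell_eq_condExp_of_lt_snellHit {t : ℕ} {ω : Ω} (h : t < snellHit μ ℱ U T ω) :
    snell μ ℱ U T t ω = (μ[snell μ ℱ U T (t + 1) | ℱ t]) ω := by
  have hne : snell μ ℱ U T t ω ≠ U t ω := Nat.notMem_of_lt_sInf h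
  rw [snell_eq_max (h.trans_le (snellHit_le ω))] at hne ⊢
  exact (max_choice _ _).resolve_left hne

theorem martingale_snell_stopped [IsFiniteMeasure μ] (hadp : Adapted ℱ U)
    (hint : ∀ t, Integrable (U t) μ) :
    Martingale (fun t ω => snell μ ℱ U T (min t (snellHit μ ℱ U T ω)) ω) ℱ μ := by
  rw [← stoppedProcess_natCast_eq]
  refine martingale_stoppedProcess_of_condExp_eq
    (fun t => (adapted_snell hadp t).stronglyMeasurable) (integrable_snell hint)
    (isStoppingTime_snellHit hadp) fun t => Eventually.of_forall fun ω h => ?_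
  exact (snell_eq_condExp_of_lt_snellHit (by exact_mod_cast h)).symm

theorem integral_snell_zero [IsFiniteMeasure μ] (hadp : Adapted ℱ U)
    (hint : ∀ t, Integrable (U t) μ) :
    ∫ ω, snell μ ℱ U T 0 ω ∂μ = ∫ ω, U (snellHit μ ℱ U T ω) ω ∂μ := by
  have h :=
    (martingale_snell_stopped (T := T) hadp hint).setIntegral_eq T.zero_le MeasurableSet.univ
  simpa only [setIntegral_univ, zero_min, min_eq_right (snellHit_le _), snell_snellHit] using h

theorem integral_le_integral_snell_zero [IsFiniteMeasure μ] (hadp : Adapted ℱ U)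
    (hint : ∀ t, Integrable (U t) μ) {σ : Ω → ℕ}
    (hσ : IsStoppingTime ℱ (fun ω => (σ ω : WithTop ℕ))) (hσT : ∀ ω, σ ω ≤ T) :
    ∫ ω, U (σ ω) ω ∂μ ≤ ∫ ω, snell μ ℱ U T 0 ω ∂μ := by
  have hσT' : ∀ ω, (σ ω : WithTop ℕ) ≤ T := fun ω => by exact_mod_cast hσT ω
  calc ∫ ω, U (σ ω) ω ∂μ ≤ ∫ ω, snell μ ℱ U T (σ ω) ω ∂μ :=
        integral_mono (integrable_stoppedValue ℕ hσ hint hσT')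
          (integrable_stoppedValue ℕ hσ (integrable_snell hint) hσT')
          fun ω => le_snell (hσT ω) ω
    _ ≤ ∫ ω, snell μ ℱ U T 0 ω ∂μ :=
        (supermartingale_snell hadp hint).integral_stoppedValue_le (isStoppingTime_const ℱ 0) hσ
          (fun ω => WithTop.coe_le_coe.2 (σ ω).zero_le) hσT'

end Snell

/-- Optimality of the first hitting time `τ* = min{t : Z_t = U_t}`: the stopped
Snell envelope `(Z_{t ∧ τ*})_t` is a martingale, and consequently
`E[Z_0] = E[U_{τ*}]`, which is the largest value of `E[U_τ]` over all stopping
times `τ ≤ T`. -/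
theorem stmt9 {Ω : Type*} {m0 : MeasurableSpace Ω} (μ : Measure Ω) [IsProbabilityMeasure μ]
    (ℱ : MeasureTheory.Filtration ℕ m0) (T : ℕ)
    (U : ℕ → Ω → ℝ) (hadp : Adapted ℱ U) (hint : ∀ t, Integrable (U t) μ) :
    Martingale (fun t ω => snell μ ℱ U T (min t (snellHit μ ℱ U T ω)) ω) ℱ μ ∧
      ∫ ω, snell μ ℱ U T 0 ω ∂μ = ∫ ω, U (snellHit μ ℱ U T ω) ω ∂μ ∧
      IsGreatest
        {r | ∃ τ : Ω → ℕ, IsStoppingTime ℱ (fun ω => (τ ω : WithTop ℕ)) ∧ (∀ ω, τ ω ≤ T) ∧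
          r = ∫ ω, U (τ ω) ω ∂μ}
        (∫ ω, U (snellHit μ ℱ U T ω) ω ∂μ) := by
  refine ⟨martingale_snell_stopped hadp hint, integral_snell_zero hadp hint,
    ⟨snellHit μ ℱ U T, isStoppingTime_snellHit hadp, snellHit_le, rfl⟩, ?_⟩
  rintro _ ⟨σ, hσ, hσT, rfl⟩
  rw [← integral_snell_zero hadp hint]
  exact integral_le_integral_snell_zero hadp hint hσ hσT
end

section
/- In discrete time over {0,...,T}: if Z_n = M_n - A_n, where Z is an adapted process with square-integrable maximal function, i.e. E[(sup_n |Z_n|)²] < ∞, M is a martingale, and A is a predictable nondecreasing process with A_0 = 0, then E[A_T²] < ∞ and hence E[(sup_n |M_n|)²] < ∞. -/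
open MeasureTheory ENNReal

private lemma Real.ennnorm_eq_ofReal {r : ℝ} (h : 0 ≤ r) :
    (‖r‖₊ : ℝ≥0∞) = ENNReal.ofReal r := Real.enorm_eq_ofReal h

private lemma min_sub_min_le_aux {a b n : ℝ} (hab : a ≤ b) : min b n - min a n ≤ b - a := by
  rcases le_total a n with h | h
  · rw [min_eq_left h]
    have := min_le_left b n
    linarith
  · rw [min_eq_right h, min_eq_right (h.trans hab)]
    linarith

private lemma ennreal_add_sq_le (a b : ℝ≥0∞) : (a + b) ^ 2 ≤ 4 * (a ^ 2 + b ^ 2) := by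
  have h1 : a + b ≤ 2 * (a ⊔ b) := by
    rw [two_mul]; exact add_le_add le_sup_left le_sup_right
  have h2 : (a ⊔ b) ^ 2 ≤ a ^ 2 + b ^ 2 := by
    rcases le_total a b with h | h
    · rw [sup_eq_right.2 h]; exact le_add_self
    · rw [sup_eq_left.2 h]; exact le_self_add
  calc (a + b) ^ 2 ≤ (2 * (a ⊔ b)) ^ 2 := pow_le_pow_left₀ (zero_le) h1 2
    _ = 4 * (a ⊔ b) ^ 2 := by ring
    _ ≤ 4 * (a ^ 2 + b ^ 2) := by exact mul_le_mul_right h2 4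

/-- Integrability in the discrete Doob decomposition: if `Z = M - A` on
`{0,…,T}` with `Z` having square-integrable maximal function, `M` a martingale
and `A` predictable nondecreasing with `A_0 = 0`, then `A_T ∈ L²` and hence `M`
has square-integrable maximal function. -/
theorem stmt10 {Ω : Type*} {m0 : MeasurableSpace Ω} (μ : Measure Ω) [IsProbabilityMeasure μ]
    (ℱ : Filtration ℕ m0) (T : ℕ)
    (Z M A : ℕ → Ω → ℝ)
    (hdec : ∀ t, t ≤ T → ∀ ω, Z t ω = M t ω - A t ω)
    (hM : Martingale M ℱ μ)
    (hApred : ∀ t, StronglyMeasurable[ℱ t] (A (t + 1)))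
    (hA0 : A 0 = 0)
    (hAmono : ∀ ω, Monotone fun t => A t ω)
    (hAint : ∀ t, Integrable (A t) μ)
    (hZmax : (∫⁻ ω, (⨆ t : Fin (T + 1), (‖Z t ω‖₊ : ℝ≥0∞)) ^ 2 ∂μ) < ∞) :
    (∫⁻ ω, (‖A T ω‖₊ : ℝ≥0∞) ^ 2 ∂μ) < ∞ ∧
      (∫⁻ ω, (⨆ t : Fin (T + 1), (‖M t ω‖₊ : ℝ≥0∞)) ^ 2 ∂μ) < ∞ := by
  -- basic positivity facts
  have hAnn : ∀ t ω, 0 ≤ A t ω := by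
    intro t ω
    have := hAmono ω (Nat.zero_le t)
    simpa [hA0] using this
  have hZint : ∀ t, t ≤ T → Integrable (Z t) μ := by
    intro t ht
    have : Z t = fun ω => M t ω - A t ω := funext (hdec t ht)
    rw [this]
    exact (hM.integrable t).sub (hAint t)
  -- the dominating function S
  set S : Ω → ℝ := fun ω => ∑ t ∈ Finset.range (T + 1), |Z t ω| with hS_def
  have hSint : Integrable S μ := by
    apply integrable_finset_sum
    intro t ht
    exact (hZint t (Nat.lt_succ_iff.mp (Finset.mem_range.mp ht))).abs
  have hS_nonneg : ∀ ω, 0 ≤ S ω := fun ω =>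
    Finset.sum_nonneg fun t _ => abs_nonneg _
  have habsZ_le_S : ∀ t, t ≤ T → ∀ ω, |Z t ω| ≤ S ω := by
    intro t ht ω
    exact Finset.single_le_sum (f := fun t => |Z t ω|) (fun i _ => abs_nonneg _)
      (Finset.mem_range.mpr (Nat.lt_succ_iff.mpr ht))
  -- Y : second moment of S, finite
  set Y : ℝ≥0∞ := ∫⁻ ω, (‖S ω‖₊ : ℝ≥0∞) ^ 2 ∂μ with hY_def
  have hYfin : Y < ∞ := by
    have hpt : ∀ ω, (‖S ω‖₊ : ℝ≥0∞) ^ 2 ≤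
        ((T + 1 : ℕ) : ℝ≥0∞) ^ 2 * (⨆ t : Fin (T + 1), (‖Z t ω‖₊ : ℝ≥0∞)) ^ 2 := by
      intro ω
      have h1 : (‖S ω‖₊ : ℝ≥0∞) ≤ ((T + 1 : ℕ) : ℝ≥0∞) * ⨆ t : Fin (T + 1), (‖Z t ω‖₊ : ℝ≥0∞) := by
        calc (‖S ω‖₊ : ℝ≥0∞) ≤ ∑ t ∈ Finset.range (T + 1), (‖|Z t ω|‖₊ : ℝ≥0∞) := by
              rw [← ENNReal.coe_finset_sum]
              exact ENNReal.coe_le_coe.mpr (nnnorm_sum_le _ _)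
          _ ≤ ∑ t ∈ Finset.range (T + 1), ⨆ s : Fin (T + 1), (‖Z s ω‖₊ : ℝ≥0∞) := by
              refine Finset.sum_le_sum fun t ht => ?_
              rw [Real.nnnorm_abs]
              exact le_iSup (fun s : Fin (T + 1) => (‖Z s ω‖₊ : ℝ≥0∞)) ⟨t, Finset.mem_range.mp ht⟩
          _ = ((T + 1 : ℕ) : ℝ≥0∞) * ⨆ s : Fin (T + 1), (‖Z s ω‖₊ : ℝ≥0∞) := by
              rw [Finset.sum_const, Finset.card_range, nsmul_eq_mul]
      calc (‖S ω‖₊ : ℝ≥0∞) ^ 2 ≤ (((T + 1 : ℕ) : ℝ≥0∞) * ⨆ t : Fin (T + 1), (‖Z t ω‖₊ : ℝ≥0∞)) ^ 2 :=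
            pow_le_pow_left₀ (zero_le) h1 2
        _ = ((T + 1 : ℕ) : ℝ≥0∞) ^ 2 * (⨆ t : Fin (T + 1), (‖Z t ω‖₊ : ℝ≥0∞)) ^ 2 := mul_pow _ _ 2
    calc Y ≤ ∫⁻ ω, ((T + 1 : ℕ) : ℝ≥0∞) ^ 2 * (⨆ t : Fin (T + 1), (‖Z t ω‖₊ : ℝ≥0∞)) ^ 2 ∂μ :=
          lintegral_mono hpt
      _ = ((T + 1 : ℕ) : ℝ≥0∞) ^ 2 * ∫⁻ ω, (⨆ t : Fin (T + 1), (‖Z t ω‖₊ : ℝ≥0∞)) ^ 2 ∂μ :=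
          lintegral_const_mul' _ _ (by simp)
      _ < ∞ := ENNReal.mul_lt_top (ENNReal.pow_lt_top (ENNReal.natCast_lt_top _)) hZmax
  -- truncated processes
  have hXbound : ∀ n : ℕ, (∫⁻ ω, (‖min (A T ω) (n : ℝ)‖₊ : ℝ≥0∞) ^ 2 ∂μ) ≤
      ENNReal.ofReal (4 * T) ^ 2 * Y := by
    intro n
    set B : ℕ → Ω → ℝ := fun k ω => min (A k ω) (n : ℝ) with hB_def
    have hn0 : (0 : ℝ) ≤ n := n.cast_nonneg
    have hB_nonneg : ∀ k ω, 0 ≤ B k ω := fun k ω => le_min (hAnn k ω) hn0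
    have hB_le : ∀ k ω, B k ω ≤ n := fun k ω => min_le_right _ _
    have hB_bound : ∀ k ω, ‖B k ω‖ ≤ n := by
      intro k ω
      rw [Real.norm_eq_abs, abs_of_nonneg (hB_nonneg k ω)]
      exact hB_le k ω
    have hB_mono : ∀ ω, Monotone fun k => B k ω :=
      fun ω j k hjk => min_le_min (hAmono ω hjk) le_rfl
    have hBsm : ∀ k, StronglyMeasurable[ℱ k] (B (k + 1)) := fun k =>
      ((hApred k).measurable.min measurable_const).stronglyMeasurable
    have hBaesm : ∀ k, AEStronglyMeasurable (B k) μ := by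
      intro k
      cases k with
      | zero =>
        have : B 0 = fun _ => (0 : ℝ) := funext fun ω => by
          simp [hB_def, hA0, min_eq_left hn0]
        rw [this]; exact aestronglyMeasurable_const
      | succ k => exact ((hBsm k).mono (ℱ.le k)).aestronglyMeasurable
    have hBsqint : ∀ k, Integrable (fun ω => B k ω ^ 2) μ := by
      intro k
      refine (integrable_const ((n : ℝ) ^ 2)).mono'
        ((hBaesm k).aemeasurable.pow_const 2).aestronglyMeasurable
        (Filter.Eventually.of_forall fun ω => ?_)
      rw [Real.norm_eq_abs, abs_of_nonneg (pow_nonneg (hB_nonneg k ω) 2)]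
      exact pow_le_pow_left₀ (hB_nonneg k ω) (hB_le k ω) 2
    have hprod : ∀ k (g : Ω → ℝ), Integrable g μ → Integrable (fun ω => B k ω * g ω) μ :=
      fun k g hg => hg.bdd_mul (hBaesm k) (Filter.Eventually.of_forall (hB_bound k))
    have hTS_int : Integrable (fun ω => B T ω * S ω) μ := hprod T S hSint
    -- martingale orthogonality step
    have hkey : ∀ k : ℕ, ∫ ω, B (k + 1) ω * M (k + 1) ω ∂μ = ∫ ω, B (k + 1) ω * M k ω ∂μ := by
      intro k
      have h1 : μ[B (k + 1) * M (k + 1)|ℱ k] =ᵐ[μ] B (k + 1) * μ[M (k + 1)|ℱ k] :=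
        condExp_stronglyMeasurable_mul_of_bound (ℱ.le k) (hBsm k) (hM.integrable (k + 1)) n
          (Filter.Eventually.of_forall (hB_bound (k + 1)))
      have h2 : B (k + 1) * μ[M (k + 1)|ℱ k] =ᵐ[μ] B (k + 1) * M k :=
        Filter.EventuallyEq.mul Filter.EventuallyEq.rfl (hM.condExp_ae_eq (Nat.le_succ k))
      calc ∫ ω, B (k + 1) ω * M (k + 1) ω ∂μ
          = ∫ ω, (μ[B (k + 1) * M (k + 1)|ℱ k]) ω ∂μ := (integral_condExp (ℱ.le k)).symm
        _ = ∫ ω, (B (k + 1) * μ[M (k + 1)|ℱ k]) ω ∂μ := integral_congr_ae h1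
        _ = ∫ ω, (B (k + 1) * M k) ω ∂μ := integral_congr_ae h2
        _ = ∫ ω, B (k + 1) ω * M k ω ∂μ := rfl
    -- per-step estimate
    have hstep : ∀ k, k < T →
        (∫ ω, (B (k + 1) ω ^ 2 - B k ω ^ 2) ∂μ) ≤ 4 * ∫ ω, B T ω * S ω ∂μ := by
      intro k hk
      have hk1 : k + 1 ≤ T := hk
      have hkT : k ≤ T := hk.le
      have int1 : Integrable (fun ω => B (k + 1) ω * (A (k + 1) ω - A k ω)) μ :=
        hprod (k + 1) _ ((hAint (k + 1)).sub (hAint k))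
      have int2 : Integrable
          (fun ω => B (k + 1) ω * Z k ω - B (k + 1) ω * Z (k + 1) ω) μ :=
        (hprod (k + 1) _ (hZint k hkT)).sub (hprod (k + 1) _ (hZint (k + 1) hk1))
      have step1 : (∫ ω, (B (k + 1) ω ^ 2 - B k ω ^ 2) ∂μ) ≤
          ∫ ω, 2 * (B (k + 1) ω * (A (k + 1) ω - A k ω)) ∂μ := by
        refine integral_mono ((hBsqint (k + 1)).sub (hBsqint k)) (int1.const_mul 2) fun ω => ?_
        have h1 : B k ω ≤ B (k + 1) ω := hB_mono ω (Nat.le_succ k)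
        have h2 : B (k + 1) ω - B k ω ≤ A (k + 1) ω - A k ω :=
          min_sub_min_le_aux (hAmono ω (Nat.le_succ k))
        have h3 : 0 ≤ B (k + 1) ω := hB_nonneg _ _
        have h0 : 0 ≤ B k ω := hB_nonneg _ _
        have h4 : 2 * B (k + 1) ω * (B (k + 1) ω - B k ω) ≤
            2 * B (k + 1) ω * (A (k + 1) ω - A k ω) := by
          apply mul_le_mul_of_nonneg_left h2; linarith
        nlinarith [sq_nonneg (B (k + 1) ω - B k ω)]
      have step2 : (∫ ω, B (k + 1) ω * (A (k + 1) ω - A k ω) ∂μ) =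
          ∫ ω, (B (k + 1) ω * Z k ω - B (k + 1) ω * Z (k + 1) ω) ∂μ := by
        have hsplit : (fun ω => B (k + 1) ω * (A (k + 1) ω - A k ω)) =
            fun ω => (B (k + 1) ω * M (k + 1) ω - B (k + 1) ω * M k ω) +
              (B (k + 1) ω * Z k ω - B (k + 1) ω * Z (k + 1) ω) := by
          funext ω
          have e1 := hdec k hkT ω
          have e2 := hdec (k + 1) hk1 ω
          have f1 : A k ω = M k ω - Z k ω := by linarith
          have f2 : A (k + 1) ω = M (k + 1) ω - Z (k + 1) ω := by linarith
          rw [f1, f2]; ring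
        have int3 : Integrable
            (fun ω => B (k + 1) ω * M (k + 1) ω - B (k + 1) ω * M k ω) μ :=
          (hprod (k + 1) _ (hM.integrable (k + 1))).sub (hprod (k + 1) _ (hM.integrable k))
        rw [hsplit, integral_add int3 int2,
          integral_sub (hprod (k + 1) _ (hM.integrable (k + 1)))
            (hprod (k + 1) _ (hM.integrable k)), hkey k, sub_self, zero_add]
      have step4 : (∫ ω, (B (k + 1) ω * Z k ω - B (k + 1) ω * Z (k + 1) ω) ∂μ) ≤
          ∫ ω, 2 * (B T ω * S ω) ∂μ := by
        refine integral_mono int2 (hTS_int.const_mul 2) fun ω => ?_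
        have hb0 : 0 ≤ B (k + 1) ω := hB_nonneg _ _
        have hbT : B (k + 1) ω ≤ B T ω := hB_mono ω hk1
        have u1 : B (k + 1) ω * Z k ω ≤ B (k + 1) ω * S ω :=
          mul_le_mul_of_nonneg_left ((le_abs_self _).trans (habsZ_le_S k hkT ω)) hb0
        have u2 : -(B (k + 1) ω * Z (k + 1) ω) ≤ B (k + 1) ω * S ω := by
          rw [← mul_neg]
          exact mul_le_mul_of_nonneg_left ((neg_le_abs _).trans (habsZ_le_S (k + 1) hk1 ω)) hb0
        have u3 : B (k + 1) ω * S ω ≤ B T ω * S ω :=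
          mul_le_mul_of_nonneg_right hbT (hS_nonneg ω)
        simp only []
        linarith
      calc (∫ ω, (B (k + 1) ω ^ 2 - B k ω ^ 2) ∂μ)
          ≤ ∫ ω, 2 * (B (k + 1) ω * (A (k + 1) ω - A k ω)) ∂μ := step1
        _ = 2 * ∫ ω, B (k + 1) ω * (A (k + 1) ω - A k ω) ∂μ := integral_const_mul 2 _
        _ = 2 * ∫ ω, (B (k + 1) ω * Z k ω - B (k + 1) ω * Z (k + 1) ω) ∂μ := by rw [step2]
        _ ≤ 2 * ∫ ω, 2 * (B T ω * S ω) ∂μ := by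
            have := step4
            linarith
        _ = 4 * ∫ ω, B T ω * S ω ∂μ := by rw [integral_const_mul]; ring
    -- telescoping sum
    have hmain : (∫ ω, B T ω ^ 2 ∂μ) ≤ (4 * T) * ∫ ω, B T ω * S ω ∂μ := by
      have hpt : (fun ω => B T ω ^ 2) =
          fun ω => ∑ k ∈ Finset.range T, (B (k + 1) ω ^ 2 - B k ω ^ 2) := by
        funext ω
        rw [Finset.sum_range_sub (f := fun k => B k ω ^ 2)]
        have hB0 : B 0 ω = 0 := by simp [hB_def, hA0, min_eq_left hn0]
        rw [hB0]
        ring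
      calc (∫ ω, B T ω ^ 2 ∂μ)
          = ∑ k ∈ Finset.range T, ∫ ω, (B (k + 1) ω ^ 2 - B k ω ^ 2) ∂μ := by
            rw [hpt]
            exact integral_finset_sum (Finset.range T)
              (f := fun k ω => B (k + 1) ω ^ 2 - B k ω ^ 2)
              (fun k _ => (hBsqint (k + 1)).sub (hBsqint k))
        _ ≤ ∑ k ∈ Finset.range T, (4 * ∫ ω, B T ω * S ω ∂μ) :=
            Finset.sum_le_sum fun k hk => hstep k (Finset.mem_range.mp hk)
        _ = (4 * T) * ∫ ω, B T ω * S ω ∂μ := by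
            rw [Finset.sum_const, Finset.card_range, nsmul_eq_mul]; ring
    -- move to lintegrals
    set X : ℝ≥0∞ := ∫⁻ ω, (‖B T ω‖₊ : ℝ≥0∞) ^ 2 ∂μ with hX_def
    have hXeq : X = ENNReal.ofReal (∫ ω, B T ω ^ 2 ∂μ) := by
      rw [ofReal_integral_eq_lintegral_ofReal (hBsqint T)
        (Filter.Eventually.of_forall fun ω => sq_nonneg _)]
      refine lintegral_congr fun ω => ?_
      rw [Real.ennnorm_eq_ofReal (hB_nonneg T ω), ← ENNReal.ofReal_pow (hB_nonneg T ω)]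
    have hXfin : X ≠ ⊤ := by
      have hle : X ≤ ENNReal.ofReal n ^ 2 := by
        calc X ≤ ∫⁻ _, ENNReal.ofReal n ^ 2 ∂μ := by
              refine lintegral_mono fun ω => ?_
              rw [Real.ennnorm_eq_ofReal (hB_nonneg T ω)]
              exact pow_le_pow_left₀ (zero_le) (ENNReal.ofReal_le_ofReal (hB_le T ω)) 2
          _ = ENNReal.ofReal n ^ 2 := by rw [lintegral_const, measure_univ, mul_one]
      exact ne_top_of_le_ne_top (ENNReal.pow_ne_top ENNReal.ofReal_ne_top) hle
    have hBS : ENNReal.ofReal (∫ ω, B T ω * S ω ∂μ) =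
        ∫⁻ ω, (‖B T ω‖₊ : ℝ≥0∞) * ‖S ω‖₊ ∂μ := by
      rw [ofReal_integral_eq_lintegral_ofReal hTS_int
        (Filter.Eventually.of_forall fun ω => mul_nonneg (hB_nonneg T ω) (hS_nonneg ω))]
      refine lintegral_congr fun ω => ?_
      rw [ENNReal.ofReal_mul (hB_nonneg T ω), Real.ennnorm_eq_ofReal (hB_nonneg T ω),
        Real.ennnorm_eq_ofReal (hS_nonneg ω)]
    have hconj : Real.HolderConjugate 2 2 := Real.HolderConjugate.two_two
    have hhold : (∫⁻ ω, (‖B T ω‖₊ : ℝ≥0∞) * ‖S ω‖₊ ∂μ) ≤ X ^ (1/2 : ℝ) * Y ^ (1/2 : ℝ) := by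
      have h2 : ∀ x : ℝ≥0∞, x ^ (2 : ℝ) = x ^ (2 : ℕ) := fun x => by
        rw [← ENNReal.rpow_natCast]; norm_num
      have := ENNReal.lintegral_mul_le_Lp_mul_Lq μ hconj
        (f := fun ω => (‖B T ω‖₊ : ℝ≥0∞)) (g := fun ω => (‖S ω‖₊ : ℝ≥0∞))
        (hBaesm T).enorm hSint.1.enorm
      simp only [Pi.mul_apply, h2] at this
      convert this using 2 <;> norm_num
    have hXle : X ≤ ENNReal.ofReal (4 * T) * (X ^ (1/2 : ℝ) * Y ^ (1/2 : ℝ)) := by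
      calc X = ENNReal.ofReal (∫ ω, B T ω ^ 2 ∂μ) := hXeq
        _ ≤ ENNReal.ofReal ((4 * T) * ∫ ω, B T ω * S ω ∂μ) := ENNReal.ofReal_le_ofReal hmain
        _ = ENNReal.ofReal (4 * T) * ENNReal.ofReal (∫ ω, B T ω * S ω ∂μ) :=
            ENNReal.ofReal_mul (by positivity)
        _ = ENNReal.ofReal (4 * T) * ∫⁻ ω, (‖B T ω‖₊ : ℝ≥0∞) * ‖S ω‖₊ ∂μ := by rw [hBS]
        _ ≤ ENNReal.ofReal (4 * T) * (X ^ (1/2 : ℝ) * Y ^ (1/2 : ℝ)) :=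
            mul_le_mul_right hhold _
    -- conclude X ≤ (4T)² Y
    by_cases hX0 : X = 0
    · rw [hX0]; exact zero_le
    have hXhne : X ^ (1/2 : ℝ) ≠ 0 := by
      intro h
      rw [ENNReal.rpow_eq_zero_iff] at h
      rcases h with ⟨h, _⟩ | ⟨h, hlt⟩
      · exact hX0 h
      · exact hXfin h
    have hXhtop : X ^ (1/2 : ℝ) ≠ ⊤ := ENNReal.rpow_ne_top_of_nonneg (by norm_num) hXfin
    have hXsplit : X = X ^ (1/2 : ℝ) * X ^ (1/2 : ℝ) := by
      rw [← ENNReal.rpow_add _ _ hX0 hXfin]; norm_num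
    have h5 : X ^ (1/2 : ℝ) * X ^ (1/2 : ℝ) ≤
        (ENNReal.ofReal (4 * T) * Y ^ (1/2 : ℝ)) * X ^ (1/2 : ℝ) := by
      rw [← hXsplit]
      calc X ≤ ENNReal.ofReal (4 * T) * (X ^ (1/2 : ℝ) * Y ^ (1/2 : ℝ)) := hXle
        _ = (ENNReal.ofReal (4 * T) * Y ^ (1/2 : ℝ)) * X ^ (1/2 : ℝ) := by ring
    have h6 : X ^ (1/2 : ℝ) ≤ ENNReal.ofReal (4 * T) * Y ^ (1/2 : ℝ) :=
      (ENNReal.mul_le_mul_iff_left hXhne hXhtop).mp h5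
    have hXsq : X = (X ^ (1/2 : ℝ)) ^ (2 : ℕ) := by
      rw [← ENNReal.rpow_natCast (X ^ (1/2 : ℝ)) 2, ← ENNReal.rpow_mul]
      norm_num
    have hYsq : (Y ^ (1/2 : ℝ)) ^ (2 : ℕ) = Y := by
      rw [← ENNReal.rpow_natCast (Y ^ (1/2 : ℝ)) 2, ← ENNReal.rpow_mul]
      norm_num
    calc X = (X ^ (1/2 : ℝ)) ^ (2 : ℕ) := hXsq
      _ ≤ (ENNReal.ofReal (4 * T) * Y ^ (1/2 : ℝ)) ^ (2 : ℕ) :=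
          pow_le_pow_left₀ (zero_le) h6 2
      _ = ENNReal.ofReal (4 * T) ^ 2 * Y := by rw [mul_pow, hYsq]
  -- monotone convergence to remove the truncation
  have hsupA : (∫⁻ ω, (‖A T ω‖₊ : ℝ≥0∞) ^ 2 ∂μ) =
      ⨆ n : ℕ, ∫⁻ ω, (‖min (A T ω) (n : ℝ)‖₊ : ℝ≥0∞) ^ 2 ∂μ := by
    have hptw : ∀ ω, (‖A T ω‖₊ : ℝ≥0∞) ^ 2 =
        ⨆ n : ℕ, (‖min (A T ω) (n : ℝ)‖₊ : ℝ≥0∞) ^ 2 := by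
      intro ω
      apply le_antisymm
      · refine le_iSup_of_le ⌈A T ω⌉₊ ?_
        rw [min_eq_left (Nat.le_ceil _)]
      · refine iSup_le fun n => ?_
        rw [Real.ennnorm_eq_ofReal (le_min (hAnn T ω) n.cast_nonneg),
          Real.ennnorm_eq_ofReal (hAnn T ω)]
        exact pow_le_pow_left₀ (zero_le) (ENNReal.ofReal_le_ofReal (min_le_left _ _)) 2
    calc (∫⁻ ω, (‖A T ω‖₊ : ℝ≥0∞) ^ 2 ∂μ)
        = ∫⁻ ω, ⨆ n : ℕ, (‖min (A T ω) (n : ℝ)‖₊ : ℝ≥0∞) ^ 2 ∂μ := lintegral_congr hptw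
      _ = ⨆ n : ℕ, ∫⁻ ω, (‖min (A T ω) (n : ℝ)‖₊ : ℝ≥0∞) ^ 2 ∂μ := by
          refine lintegral_iSup' (fun n => ?_) (Filter.Eventually.of_forall fun ω i j hij => ?_)
          · exact (((hAint T).1.aemeasurable.inf_const ((n : ℝ))).aestronglyMeasurable.enorm.pow_const 2)
          · show (‖min (A T ω) (i : ℝ)‖₊ : ℝ≥0∞) ^ 2 ≤ (‖min (A T ω) (j : ℝ)‖₊ : ℝ≥0∞) ^ 2
            rw [Real.ennnorm_eq_ofReal (le_min (hAnn T ω) i.cast_nonneg),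
              Real.ennnorm_eq_ofReal (le_min (hAnn T ω) j.cast_nonneg)]
            exact pow_le_pow_left₀ (zero_le)
              (ENNReal.ofReal_le_ofReal (min_le_min le_rfl (Nat.cast_le.mpr hij))) 2
  have hA2 : (∫⁻ ω, (‖A T ω‖₊ : ℝ≥0∞) ^ 2 ∂μ) ≤ ENNReal.ofReal (4 * T) ^ 2 * Y := by
    rw [hsupA]; exact iSup_le hXbound
  have first : (∫⁻ ω, (‖A T ω‖₊ : ℝ≥0∞) ^ 2 ∂μ) < ∞ :=
    lt_of_le_of_lt hA2 (ENNReal.mul_lt_top (ENNReal.pow_lt_top ENNReal.ofReal_lt_top) hYfin)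
  refine ⟨first, ?_⟩
  -- second moment of the maximal function of M
  have hMpt : ∀ ω, (⨆ t : Fin (T + 1), (‖M t ω‖₊ : ℝ≥0∞)) ^ 2 ≤
      4 * ((‖A T ω‖₊ : ℝ≥0∞) ^ 2 + (⨆ t : Fin (T + 1), (‖Z t ω‖₊ : ℝ≥0∞)) ^ 2) := by
    intro ω
    have h1 : (⨆ t : Fin (T + 1), (‖M t ω‖₊ : ℝ≥0∞)) ≤
        (‖A T ω‖₊ : ℝ≥0∞) + ⨆ t : Fin (T + 1), (‖Z t ω‖₊ : ℝ≥0∞) := by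
      refine iSup_le fun t => ?_
      have ht : (t : ℕ) ≤ T := Nat.lt_succ_iff.mp t.2
      have hMeq : M t ω = Z t ω + A t ω := by
        have := hdec t ht ω; linarith
      calc (‖M t ω‖₊ : ℝ≥0∞) = ‖Z (t : ℕ) ω + A t ω‖₊ := by rw [hMeq]
        _ ≤ (‖Z (t : ℕ) ω‖₊ : ℝ≥0∞) + ‖A t ω‖₊ := by
            exact_mod_cast nnnorm_add_le _ _
        _ ≤ (⨆ s : Fin (T + 1), (‖Z s ω‖₊ : ℝ≥0∞)) + ‖A T ω‖₊ := by
            refine add_le_add (le_iSup (fun s : Fin (T + 1) => (‖Z s ω‖₊ : ℝ≥0∞)) t) ?_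
            rw [Real.ennnorm_eq_ofReal (hAnn t ω), Real.ennnorm_eq_ofReal (hAnn T ω)]
            exact ENNReal.ofReal_le_ofReal (hAmono ω ht)
        _ = (‖A T ω‖₊ : ℝ≥0∞) + ⨆ s : Fin (T + 1), (‖Z s ω‖₊ : ℝ≥0∞) := add_comm _ _
    calc (⨆ t : Fin (T + 1), (‖M t ω‖₊ : ℝ≥0∞)) ^ 2
        ≤ ((‖A T ω‖₊ : ℝ≥0∞) + ⨆ t : Fin (T + 1), (‖Z t ω‖₊ : ℝ≥0∞)) ^ 2 :=
          pow_le_pow_left₀ (zero_le) h1 2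
      _ ≤ 4 * ((‖A T ω‖₊ : ℝ≥0∞) ^ 2 + (⨆ t : Fin (T + 1), (‖Z t ω‖₊ : ℝ≥0∞)) ^ 2) :=
          ennreal_add_sq_le _ _
  have hAe : AEMeasurable (fun ω => 4 * (‖A T ω‖₊ : ℝ≥0∞) ^ 2) μ :=
    ((hAint T).1.enorm.pow_const 2).const_mul 4
  calc (∫⁻ ω, (⨆ t : Fin (T + 1), (‖M t ω‖₊ : ℝ≥0∞)) ^ 2 ∂μ)
      ≤ ∫⁻ ω, (4 * (‖A T ω‖₊ : ℝ≥0∞) ^ 2 +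
          4 * (⨆ t : Fin (T + 1), (‖Z t ω‖₊ : ℝ≥0∞)) ^ 2) ∂μ := by
        refine lintegral_mono fun ω => (hMpt ω).trans ?_
        rw [mul_add]
    _ = (∫⁻ ω, 4 * (‖A T ω‖₊ : ℝ≥0∞) ^ 2 ∂μ) +
        ∫⁻ ω, 4 * (⨆ t : Fin (T + 1), (‖Z t ω‖₊ : ℝ≥0∞)) ^ 2 ∂μ :=
        lintegral_add_left' hAe _
    _ = 4 * (∫⁻ ω, (‖A T ω‖₊ : ℝ≥0∞) ^ 2 ∂μ) +
        4 * ∫⁻ ω, (⨆ t : Fin (T + 1), (‖Z t ω‖₊ : ℝ≥0∞)) ^ 2 ∂μ := by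
        rw [lintegral_const_mul' _ _ (by norm_num), lintegral_const_mul' _ _ (by norm_num)]
    _ < ∞ := by
        refine ENNReal.add_lt_top.mpr ⟨?_, ?_⟩
        · exact ENNReal.mul_lt_top (by norm_num) first
        · exact ENNReal.mul_lt_top (by norm_num) hZmax
end
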